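/- arXiv:2303.11433 — 3 statements merged into one kernel-verified Lean document; each statement's English description precedes it below -/
import Mathlib

section
/- If m_j ≥ 0 for all j = 1,...,J and the scheme update is m_j' = (1 − (Δt/Δx)A_j − Δt(d_j + a_j) − Δt·Σ_{i=1}^J κ_{i,j} m_i)·m_j + (Δt/Δx)(A_j − B_j)·m_{j−1} + Δt·Σ_{i=j}^J b_{i,j} a_i m_i + (Δt/2)·Σ_{i=1}^{j−1} κ_{i,j−i} m_i m_{j−i}, where all coefficients a_i, d_j, κ_{i,j}, b_{i,j} are nonnegative, A_j − B_j ≥ 0, and (Δt/Δx)A_j + Δt(d_j + a_j) + Δt·Σ_{i=1}^J κ_{i,j} m_i ≤ 1 for each j, then m_j' ≥ 0 for all j. -/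
/-! The CFL condition makes the coefficient of `m j` nonnegative; every other term of the update
is a product of nonnegative quantities, since all sizes that occur (`j - 1`, `i ∈ [j, J]`, and
`i`, `j - i` for `i ∈ [1, j - 1]`) lie in `[0, J]`. -/

open Finset

theorem explicit_scheme_positivity_general (J : ℕ) (Δt Δx : ℝ)
    (hΔt : 0 ≤ Δt) (hΔx : 0 < Δx)
    (m m' a d A B : ℕ → ℝ) (κ b : ℕ → ℕ → ℝ)
    (hm : ∀ j, j ≤ J → 0 ≤ m j)
    (ha : ∀ i, 0 ≤ a i)
    (hκ : ∀ i j, 0 ≤ κ i j) (hb : ∀ i j, 0 ≤ b i j)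
    (hAB : ∀ j ∈ Icc 1 J, 0 ≤ A j - B j)
    (hCFL : ∀ j ∈ Icc 1 J,
      Δt / Δx * A j + Δt * (d j + a j) + Δt * ∑ i ∈ Icc 1 J, κ i j * m i ≤ 1)
    (hupd : ∀ j ∈ Icc 1 J,
      m' j = (1 - Δt / Δx * A j - Δt * (d j + a j)
                - Δt * ∑ i ∈ Icc 1 J, κ i j * m i) * m j
             + Δt / Δx * (A j - B j) * m (j - 1)
             + Δt * ∑ i ∈ Icc j J, b i j * a i * m i
             + Δt / 2 * ∑ i ∈ Icc 1 (j - 1), κ i (j - i) * m i * m (j - i)) :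
    ∀ j ∈ Icc 1 J, 0 ≤ m' j := by
  intro j hj
  have hjJ : j ≤ J := (mem_Icc.mp hj).2
  have hm_le_j : ∀ i ≤ j, 0 ≤ m i := fun i hi => hm i (hi.trans hjJ)
  have loss : 0 ≤ (1 - Δt / Δx * A j - Δt * (d j + a j)
      - Δt * ∑ i ∈ Icc 1 J, κ i j * m i) * m j :=
    mul_nonneg (by linarith [hCFL j hj]) (hm j hjJ)
  have transport : 0 ≤ Δt / Δx * (A j - B j) * m (j - 1) :=
    mul_nonneg (mul_nonneg (div_nonneg hΔt hΔx.le) (hAB j hj)) (hm_le_j _ (Nat.sub_le j 1))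
  have fragmentation : 0 ≤ Δt * ∑ i ∈ Icc j J, b i j * a i * m i :=
    mul_nonneg hΔt <| sum_nonneg fun i hi =>
      mul_nonneg (mul_nonneg (hb i j) (ha i)) (hm i (mem_Icc.mp hi).2)
  have coagulation : 0 ≤ Δt / 2 * ∑ i ∈ Icc 1 (j - 1), κ i (j - i) * m i * m (j - i) :=
    mul_nonneg (by positivity) <| sum_nonneg fun i hi =>
      mul_nonneg (mul_nonneg (hκ i (j - i)) (hm_le_j i (by grind)))
        (hm_le_j (j - i) (Nat.sub_le j i))
  rw [hupd j hj]
  exact add_nonneg (add_nonneg (add_nonneg loss transport) fragmentation) coagulation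

theorem explicit_scheme_positivity (J : ℕ) (Δt Δx : ℝ)
    (hΔt : 0 ≤ Δt) (hΔx : 0 < Δx)
    (m m' a d A B : ℕ → ℝ) (κ b : ℕ → ℕ → ℝ)
    (hm : ∀ j, j ≤ J → 0 ≤ m j)
    (ha : ∀ i, 0 ≤ a i) (hd : ∀ j, 0 ≤ d j)
    (hκ : ∀ i j, 0 ≤ κ i j) (hb : ∀ i j, 0 ≤ b i j)
    (hAB : ∀ j ∈ Icc 1 J, 0 ≤ A j - B j)
    (hCFL : ∀ j ∈ Icc 1 J,
      Δt / Δx * A j + Δt * (d j + a j) + Δt * ∑ i ∈ Icc 1 J, κ i j * m i ≤ 1)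
    (hupd : ∀ j ∈ Icc 1 J,
      m' j = (1 - Δt / Δx * A j - Δt * (d j + a j)
                - Δt * ∑ i ∈ Icc 1 J, κ i j * m i) * m j
             + Δt / Δx * (A j - B j) * m (j - 1)
             + Δt * ∑ i ∈ Icc j J, b i j * a i * m i
             + Δt / 2 * ∑ i ∈ Icc 1 (j - 1), κ i (j - i) * m i * m (j - i)) :
    ∀ j ∈ Icc 1 J, 0 ≤ m' j :=
  explicit_scheme_positivity_general J Δt Δx hΔt hΔx m m' a d A B κ b hm ha hκ hb hAB hCFL hupd
end

section
/- Let κ : ℕ × ℕ → ℝ be symmetric and nonnegative with κ_{i,j} = 0 whenever i + j > J, and let m : {1,...,J} → ℝ≥0. Then the explicit coagulation terms conserve mass: Σ_{j=1}^J x_j·C_j = 0, where x_j = j·Δx and C_j = (1/2)·Σ_{i=1}^{j−1} κ_{i,j−i} m_i m_{j−i} − Σ_{i=1}^J κ_{i,j} m_i m_j. -/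
/-!
Substituting `k = j - i`, the mass-weighted gain term becomes a sum of `(i + k) F i k` over pairs
with `i + k ≤ J`, where `F i k = κ i k m i m k`; by (K2) it may be extended to all of `[1, J]²`.
Since `F` is symmetric, this is twice the mass-weighted loss term `∑ k F i k`, which cancels it.
-/

open Finset

lemma sum_Icc_sum_Icc_sub_eq_sum_filter {M : Type*} [AddCommMonoid M] (J : ℕ)
    (f : ℕ → ℕ → M) :
    ∑ j ∈ Icc 1 J, ∑ i ∈ Icc 1 (j - 1), f i (j - i)
      = ∑ p ∈ (Icc 1 J ×ˢ Icc 1 J).filter (fun p => p.1 + p.2 ≤ J), f p.1 p.2 := by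
  rw [sum_sigma']
  refine sum_nbij' (fun p => (p.2, p.1 - p.2)) (fun p => ⟨p.1 + p.2, p.1⟩) ?_ ?_ ?_ ?_ ?_ <;>
    rintro ⟨x, y⟩ h <;>
    dsimp only <;>
    simp only [mem_sigma, mem_Icc, mem_filter, mem_product, Sigma.mk.inj_iff,
      Prod.mk.injEq, heq_eq_eq, and_true, true_and] at h ⊢ <;>
    omega

lemma sum_Icc_sum_Icc_sub_of_eq_zero {M : Type*} [AddCommMonoid M] (J : ℕ)
    (f : ℕ → ℕ → M) (hf : ∀ i k, J < i + k → f i k = 0) :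
    ∑ j ∈ Icc 1 J, ∑ i ∈ Icc 1 (j - 1), f i (j - i) = ∑ i ∈ Icc 1 J, ∑ k ∈ Icc 1 J, f i k := by
  rw [sum_Icc_sum_Icc_sub_eq_sum_filter, sum_filter_of_ne, sum_product]
  intro p _ hp
  by_contra! h
  exact hp (hf p.1 p.2 h)

lemma sum_Icc_mul_sum_Icc_sub_of_eq_zero {R : Type*} [CommSemiring R] (J : ℕ)
    (F : ℕ → ℕ → R) (hF : ∀ i k, J < i + k → F i k = 0) :
    ∑ j ∈ Icc 1 J, (j : R) * ∑ i ∈ Icc 1 (j - 1), F i (j - i)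
      = ∑ i ∈ Icc 1 J, ∑ k ∈ Icc 1 J, ((i + k : ℕ) : R) * F i k := by
  have hsplit : ∀ j ∈ Icc 1 J, (j : R) * ∑ i ∈ Icc 1 (j - 1), F i (j - i)
      = ∑ i ∈ Icc 1 (j - 1), ((i + (j - i) : ℕ) : R) * F i (j - i) := by
    intro j _
    rw [mul_sum]
    refine sum_congr rfl fun i hi => ?_
    rw [Nat.add_sub_of_le (by simp only [mem_Icc] at hi; omega)]
  rw [sum_congr rfl hsplit]
  exact sum_Icc_sum_Icc_sub_of_eq_zero J (fun i k => ((i + k : ℕ) : R) * F i k)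
    fun i k h => by rw [hF i k h, mul_zero]

lemma sum_sum_add_mul_of_symm {R : Type*} [CommSemiring R] (s : Finset ℕ)
    (F : ℕ → ℕ → R) (hF : ∀ i k, F i k = F k i) :
    ∑ i ∈ s, ∑ k ∈ s, ((i + k : ℕ) : R) * F i k = 2 * ∑ k ∈ s, (k : R) * ∑ i ∈ s, F i k := by
  have hswap : ∑ i ∈ s, ∑ k ∈ s, (i : R) * F i k = ∑ i ∈ s, ∑ k ∈ s, (k : R) * F i k := by
    rw [sum_comm]
    simp only [hF]
  simp only [Nat.cast_add, add_mul, sum_add_distrib, hswap, mul_sum, two_mul]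
  rw [sum_comm]

theorem coagulation_mass_conservation_general (J : ℕ) (Δx : ℝ) (κ : ℕ → ℕ → ℝ) (m : ℕ → ℝ)
    (hκsymm : ∀ i j, κ i j = κ j i)
    (hκ0 : ∀ i j, J < i + j → κ i j = 0) :
    ∑ j ∈ Icc 1 J, (j : ℝ) * Δx *
        ((1 / 2) * ∑ i ∈ Icc 1 (j - 1), κ i (j - i) * m i * m (j - i)
          - ∑ i ∈ Icc 1 J, κ i j * m i * m j) = 0 := by
  set F : ℕ → ℕ → ℝ := fun i k => κ i k * m i * m k
  have hgain : ∑ j ∈ Icc 1 J, (j : ℝ) * ∑ i ∈ Icc 1 (j - 1), F i (j - i)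
      = 2 * ∑ j ∈ Icc 1 J, (j : ℝ) * ∑ i ∈ Icc 1 J, F i j := by
    rw [sum_Icc_mul_sum_Icc_sub_of_eq_zero J F fun i k h => by simp [F, hκ0 i k h]]
    exact sum_sum_add_mul_of_symm _ F fun i k => by simp only [F, hκsymm i k]; ring
  calc _ = Δx * ((1 / 2) * ∑ j ∈ Icc 1 J, (j : ℝ) * ∑ i ∈ Icc 1 (j - 1), F i (j - i)
          - ∑ j ∈ Icc 1 J, (j : ℝ) * ∑ i ∈ Icc 1 J, F i j) := by
        rw [mul_sub, mul_sum, mul_sum, mul_sum, ← sum_sub_distrib]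
        exact sum_congr rfl fun j _ => by ring
    _ = 0 := by rw [hgain]; ring

theorem coagulation_mass_conservation (J : ℕ) (Δx : ℝ) (κ : ℕ → ℕ → ℝ) (m : ℕ → ℝ)
    (hκsymm : ∀ i j, κ i j = κ j i) (hκ : ∀ i j, 0 ≤ κ i j)
    (hκ0 : ∀ i j, J < i + j → κ i j = 0)
    (hm : ∀ j, 0 ≤ m j) :
    ∑ j ∈ Icc 1 J, (j : ℝ) * Δx *
        ((1 / 2) * ∑ i ∈ Icc 1 (j - 1), κ i (j - i) * m i * m (j - i)
          - ∑ i ∈ Icc 1 J, κ i j * m i * m j) = 0 :=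
  coagulation_mass_conservation_general J Δx κ m hκsymm hκ0
end

section
/- For the semi-implicit scheme, under the CFL condition ζ̄·(2 + 3/(2Δx))·Δt ≤ 1 with ζ̄ = max{ζ, ‖a‖_{W^{1,∞}}}, the diagonal of the linear system (1 + Δt·Σ_{i=1}^J κ_{i,j} m_i^k)·m_j^{k+1} = (1 − (Δt/Δx)A_j^k − Δt(d_j^k + a_j))·m_j^k + (Δt/Δx)(A_j^k − B_j^k)·m_{j−1}^k + Δt·Σ_{i=j}^J b_{i,j} a_i m_i^k + (Δt/2)·Σ_{i=1}^{j−1} κ_{i,j−i} m_i^{k+1} m_{j−i}^k is strictly positive, and the right-hand-side coefficients of m_j^k and m_{j−1}^k are nonnegative whenever m_i^k ≥ 0 for all i; consequently, solving for m_j^{k+1} in increasing order of j (forward substitution, since the gain term only involves m_i^{k+1} with i < j) yields m_j^{k+1} ≥ 0 for all j. -/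
/-!
The update is lower-triangular: the only unknowns on the right are `m' i` with `i < j`, which
enter with the nonnegative weights `κ i (j - i) * mk (j - i)`. Under the CFL condition every other
right-hand coefficient is nonnegative, and the diagonal `1 + Δt ∑ κ i j mk i` is at least `1`, so
forward substitution in `j` propagates nonnegativity from `mk` to `m'`.
-/

open Finset

lemma one_add_mul_sum_mul_pos {ι : Type*} {s : Finset ι} {c : ℝ} {f g : ι → ℝ} (hc : 0 ≤ c)
    (hf : ∀ i ∈ s, 0 ≤ f i) (hg : ∀ i ∈ s, 0 ≤ g i) :
    0 < 1 + c * ∑ i ∈ s, f i * g i := by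
  have := mul_nonneg hc (sum_nonneg fun i hi => mul_nonneg (hf i hi) (hg i hi))
  linarith

lemma cfl_coeff_nonneg {Δt Δx ζbar A d : ℝ} (hΔt : 0 ≤ Δt) (hΔx : 0 < Δx)
    (hA : A ≤ 3 / 2 * ζbar) (hd : d ≤ 2 * ζbar) (hCFL : ζbar * (2 + 3 / (2 * Δx)) * Δt ≤ 1) :
    0 ≤ 1 - Δt / Δx * A - Δt * d := by
  have htransport : Δt / Δx * A ≤ Δt / Δx * (3 / 2 * ζbar) := by gcongr
  have hreaction : Δt * d ≤ Δt * (2 * ζbar) := by gcongr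
  have hsplit : Δt / Δx * (3 / 2 * ζbar) + Δt * (2 * ζbar) = ζbar * (2 + 3 / (2 * Δx)) * Δt := by
    field_simp
    ring
  linarith

lemma nonneg_of_forward_substitution {J : ℕ} {D x : ℕ → ℝ} (hD : ∀ j ∈ Icc 1 J, 0 < D j)
    (hstep : ∀ j ∈ Icc 1 J, (∀ i ∈ Icc 1 (j - 1), 0 ≤ x i) → 0 ≤ D j * x j) :
    ∀ j ∈ Icc 1 J, 0 ≤ x j := by
  intro j
  induction j using Nat.strong_induction_on with
  | _ j ih =>
    intro hj
    refine nonneg_of_mul_nonneg_right (hstep j hj fun i hi => ih i ?_ ?_) (hD j hj)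
    all_goals simp only [mem_Icc] at hi hj ⊢; omega

theorem semi_implicit_scheme_positivity_general (J : ℕ) (Δt Δx ζ ζbar : ℝ)
    (hΔt : 0 < Δt) (hΔx : 0 < Δx) (hζbar : ζ ≤ ζbar)
    (hCFL : ζbar * (2 + 3 / (2 * Δx)) * Δt ≤ 1)
    (A B d a mk m' : ℕ → ℝ) (κ b : ℕ → ℕ → ℝ)
    (hA : ∀ j, |A j| ≤ (3 / 2) * ζ)
    (hAB : ∀ j, 0 ≤ A j - B j)
    (hd : ∀ j, 0 ≤ d j ∧ d j ≤ ζ)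
    (ha : ∀ j, 0 ≤ a j ∧ a j ≤ ζbar)
    (hκ : ∀ i j, 0 ≤ κ i j) (hb : ∀ i j, 0 ≤ b i j)
    (hmk : ∀ j, 0 ≤ mk j)
    (hupd : ∀ j ∈ Icc 1 J,
      (1 + Δt * ∑ i ∈ Icc 1 J, κ i j * mk i) * m' j =
        (1 - Δt / Δx * A j - Δt * (d j + a j)) * mk j
        + Δt / Δx * (A j - B j) * mk (j - 1)
        + Δt * ∑ i ∈ Icc j J, b i j * a i * mk i
        + Δt / 2 * ∑ i ∈ Icc 1 (j - 1), κ i (j - i) * m' i * mk (j - i)) :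
    (∀ j ∈ Icc 1 J, 0 < 1 + Δt * ∑ i ∈ Icc 1 J, κ i j * mk i) ∧
    (∀ j ∈ Icc 1 J,
        0 ≤ 1 - Δt / Δx * A j - Δt * (d j + a j) ∧ 0 ≤ Δt / Δx * (A j - B j)) ∧
    ∀ j ∈ Icc 1 J, 0 ≤ m' j := by
  have hdiag : ∀ j, 0 < 1 + Δt * ∑ i ∈ Icc 1 J, κ i j * mk i := fun j =>
    one_add_mul_sum_mul_pos hΔt.le (fun i _ => hκ i j) (fun i _ => hmk i)
  have hcoef : ∀ j, 0 ≤ 1 - Δt / Δx * A j - Δt * (d j + a j) := fun j =>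
    cfl_coeff_nonneg hΔt.le hΔx (by linarith [le_abs_self (A j), hA j])
      (by linarith [(hd j).2, (ha j).2]) hCFL
  have hupwind : ∀ j, 0 ≤ Δt / Δx * (A j - B j) := fun j =>
    mul_nonneg (div_nonneg hΔt.le hΔx.le) (hAB j)
  refine ⟨fun j _ => hdiag j, fun j _ => ⟨hcoef j, hupwind j⟩, ?_⟩
  refine nonneg_of_forward_substitution (fun j _ => hdiag j) fun j hj hprev => ?_
  have hfrag : 0 ≤ ∑ i ∈ Icc j J, b i j * a i * mk i :=
    sum_nonneg fun i _ => mul_nonneg (mul_nonneg (hb i j) (ha i).1) (hmk i)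
  have hgain : 0 ≤ ∑ i ∈ Icc 1 (j - 1), κ i (j - i) * m' i * mk (j - i) :=
    sum_nonneg fun i hi => mul_nonneg (mul_nonneg (hκ _ _) (hprev i hi)) (hmk _)
  rw [hupd j hj]
  linarith [mul_nonneg (hcoef j) (hmk j), mul_nonneg (hupwind j) (hmk (j - 1)),
    mul_nonneg hΔt.le hfrag, mul_nonneg (half_pos hΔt).le hgain]

theorem semi_implicit_scheme_positivity (J : ℕ) (Δt Δx ζ ζbar : ℝ)
    (hΔt : 0 < Δt) (hΔx : 0 < Δx) (hζ : 0 ≤ ζ) (hζbar : ζ ≤ ζbar)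
    (hCFL : ζbar * (2 + 3 / (2 * Δx)) * Δt ≤ 1)
    (A B d a mk m' : ℕ → ℝ) (κ b : ℕ → ℕ → ℝ)
    (hA : ∀ j, |A j| ≤ (3 / 2) * ζ)
    (hAB : ∀ j, 0 ≤ A j - B j)
    (hd : ∀ j, 0 ≤ d j ∧ d j ≤ ζ)
    (ha : ∀ j, 0 ≤ a j ∧ a j ≤ ζbar)
    (hκ : ∀ i j, 0 ≤ κ i j) (hb : ∀ i j, 0 ≤ b i j)
    (hmk : ∀ j, 0 ≤ mk j)
    (hupd : ∀ j ∈ Icc 1 J,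
      (1 + Δt * ∑ i ∈ Icc 1 J, κ i j * mk i) * m' j =
        (1 - Δt / Δx * A j - Δt * (d j + a j)) * mk j
        + Δt / Δx * (A j - B j) * mk (j - 1)
        + Δt * ∑ i ∈ Icc j J, b i j * a i * mk i
        + Δt / 2 * ∑ i ∈ Icc 1 (j - 1), κ i (j - i) * m' i * mk (j - i)) :
    (∀ j ∈ Icc 1 J, 0 < 1 + Δt * ∑ i ∈ Icc 1 J, κ i j * mk i) ∧
    (∀ j ∈ Icc 1 J,
        0 ≤ 1 - Δt / Δx * A j - Δt * (d j + a j) ∧ 0 ≤ Δt / Δx * (A j - B j)) ∧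
    ∀ j ∈ Icc 1 J, 0 ≤ m' j :=
  semi_implicit_scheme_positivity_general J Δt Δx ζ ζbar hΔt hΔx hζbar hCFL A B d a mk m' κ b hA hAB
    hd ha hκ hb hmk hupd
end
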